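/- Let τ ⊂ ℚ^n be a full-dimensional strongly convex rational polyhedral cone, 𝔛 its affine fan, and (𝔛, !𝔅, *ℭ) a fan triple. Let 𝔛' be a subdivision of 𝔛 with full-dimensional cones τ₁, …, τ_k, carrying a fan triple (𝔛', !𝔅', *ℭ') such that: (i) for every ray ν' ∈ 𝔅', the smallest face of τ containing ν' has a ray lying in 𝔅; (ii) every ray of ℭ' that is a face of τ lies in ℭ; (iii) 𝔅 ⊆ 𝔅'; (iv) every ray ν' of 𝔛' whose smallest containing face of τ has a ray in ℭ and no ray in 𝔅 lies in ℭ'. For each face ζ of τ and each i, let Ξ_i(ζ) denote the largest face of τ_i contained in ζ (it exists and is unique). Define φ(ζ) ⊆ (ℚ^n)^* by: φ(ζ) = the zero subspace if some ray of ζ lies in 𝔅; otherwise φ(ζ) = ⋂ { ν^⊥ : ν a ray of ζ with ν ∉ 𝔅 ∪ ℭ } (the intersection over the empty family being all of (ℚ^n)^*); define φ_i on the faces of τ_i analogously, using the rays of τ_i lying in 𝔅' and in ℭ'. Then for every face ζ of τ: φ(ζ) = ⋂_{i=1}^{k} φ_i(Ξ_i(ζ)). (This is the combinatorial content of the pushforward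 formula f_* Ωᵖ_{(X',!B',*C')} = Ωᵖ_{(X,!B,*C)} for the toric birational morphism given by the subdivision.) -/

import Mathlib

namespace ToricPaper

open scoped BigOperators

/-- The ambient space `N_ℚ = ℚ^n`. -/
abbrev V (n : ℕ) := Fin n → ℚ

variable {n : ℕ}

/-- The cone of nonnegative rational combinations of elements of `A`. -/
def coneHull (A : Set (V n)) : Set (V n) :=
  {x | ∃ t : Finset (V n), ↑t ⊆ A ∧ ∃ c : V n → ℚ,
    (∀ v ∈ t, 0 ≤ c v) ∧ x = ∑ v ∈ t, c v • v}

/-- A rational polyhedral cone: the cone generated by finitely many vectors. -/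
def IsPolyCone (σ : Set (V n)) : Prop := ∃ S : Finset (V n), σ = coneHull (S : Set (V n))

/-- A cone is strongly convex if it contains no line. -/
def StronglyConvex (σ : Set (V n)) : Prop := ∀ x ∈ σ, -x ∈ σ → x = 0

/-- `F` is a face of `σ`, cut out by a linear functional nonnegative on `σ`. -/
def IsFaceOf (F σ : Set (V n)) : Prop :=
  ∃ m : (V n) →ₗ[ℚ] ℚ, (∀ x ∈ σ, 0 ≤ m x) ∧ F = {x ∈ σ | m x = 0}

/-- Dimension of a cone: the rank of its linear span. -/
noncomputable def coneDim (σ : Set (V n)) : ℕ := Module.finrank ℚ (Submodule.span ℚ σ)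

/-- A ray of a cone is a one-dimensional face. -/
def IsRayOf (ν σ : Set (V n)) : Prop := IsFaceOf ν σ ∧ coneDim ν = 1

/-- An abstract ray: a one-dimensional strongly convex rational polyhedral cone. -/
def IsRay (ν : Set (V n)) : Prop := IsPolyCone ν ∧ StronglyConvex ν ∧ coneDim ν = 1

/-- All faces of a cone `τ` (the affine fan induced by `τ`). -/
def faces (τ : Set (V n)) : Set (Set (V n)) := {F | IsFaceOf F τ}

/-- The rays of a cone `τ`. -/
def raysOf (τ : Set (V n)) : Set (Set (V n)) := {ν | IsRayOf ν τ}

/-- A fan: a finite collection of strongly convex rational polyhedral cones, closed under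
taking faces, such that the intersection of two cones is a face of each. -/
def IsFan (X : Set (Set (V n))) : Prop :=
  X.Finite ∧ (∀ σ ∈ X, IsPolyCone σ ∧ StronglyConvex σ) ∧
  (∀ σ ∈ X, ∀ F, IsFaceOf F σ → F ∈ X) ∧
  (∀ σ ∈ X, ∀ σ' ∈ X, IsFaceOf (σ ∩ σ') σ ∧ IsFaceOf (σ ∩ σ') σ')

/-- The rays (one-dimensional cones) belonging to a collection of cones. -/
def raysIn (X : Set (Set (V n))) : Set (Set (V n)) := {ν | ν ∈ X ∧ coneDim ν = 1}

/-- The support of a collection of cones. -/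
def support (X : Set (Set (V n))) : Set (V n) := ⋃₀ X

/-- The data of a fan quadruple `(X, !B, *C, !*H)`: three pairwise disjoint sets of rays. -/
def IsQuadData (X B C H : Set (Set (V n))) : Prop :=
  B ⊆ raysIn X ∧ C ⊆ raysIn X ∧ H ⊆ raysIn X ∧ Disjoint B C ∧ Disjoint B H ∧ Disjoint C H

/-- The data of a fan triple `(X, !B, *C)`: two disjoint sets of rays. -/
def IsTripleData (X B C : Set (Set (V n))) : Prop :=
  B ⊆ raysIn X ∧ C ⊆ raysIn X ∧ Disjoint B C

/-- `ρ` is a sorting function for the (restricted) quadruple on the faces of `ξ`: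
nonnegative on rays of `ξ` in `B`, nonpositive on rays of `ξ` in `C`, zero on rays of `ξ`
in none of `B`, `C`, `H`. -/
def IsSortingOn (ξ : Set (V n)) (B C H : Set (Set (V n))) (ρ : (V n) →ₗ[ℚ] ℚ) : Prop :=
  (∀ ν, IsRayOf ν ξ → ν ∈ B → ∀ x ∈ ν, 0 ≤ ρ x) ∧
  (∀ ν, IsRayOf ν ξ → ν ∈ C → ∀ x ∈ ν, ρ x ≤ 0) ∧
  (∀ ν, IsRayOf ν ξ → ν ∉ B → ν ∉ C → ν ∉ H → ∀ x ∈ ν, ρ x = 0)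

/-- The (restricted) affine quadruple on the faces of `ξ` admits a `Cf`-strict sorting
function: a sorting function which is moreover negative on `ν ∖ {0}` for every `ν ∈ Cf`. -/
def HasStrictSortingOn (ξ : Set (V n)) (B C H Cf : Set (Set (V n))) : Prop :=
  ∃ ρ : (V n) →ₗ[ℚ] ℚ, IsSortingOn ξ B C H ρ ∧
    ∀ ν, IsRayOf ν ξ → ν ∈ Cf → ∀ x ∈ ν, x ≠ 0 → ρ x < 0

/-- A cone `ξ` is `E`-unsettled if no ray of `ξ` lies in `E`. -/
def Unsettled (E : Set (Set (V n))) (ξ : Set (V n)) : Prop := ∀ ν, IsRayOf ν ξ → ν ∉ E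

/-- The quadruple `(X, !B, *C, !*H)` is `(Bs, Cf, Hs)`-sorted. -/
def SortedOn (X B C H Bs Cf Hs : Set (Set (V n))) : Prop :=
  ∀ ξ ∈ X, Unsettled ((B \ Bs) ∪ (H \ Hs)) ξ → HasStrictSortingOn ξ B C H Cf

/-- Partially-sorted: `(∅, C, ∅)`-sorted. -/
def PartiallySortedOn (X B C H : Set (Set (V n))) : Prop := SortedOn X B C H ∅ C ∅

/-- Well-sorted: `(B, C, H)`-sorted. -/
def WellSortedOn (X B C H : Set (Set (V n))) : Prop := SortedOn X B C H B C H

/-- A simplicial cone is generated by linearly independent vectors. -/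
def IsSimplicialCone (σ : Set (V n)) : Prop :=
  ∃ S : Finset (V n), LinearIndependent ℚ (fun v : S => (v : V n)) ∧
    σ = coneHull (S : Set (V n))

/-- A collection of cones is `E`-simplicial: every cone having a ray of `E` as a face is the
join of that ray with a cone of the collection of one less dimension. -/
def ESimplicialOn (X E : Set (Set (V n))) : Prop :=
  ∀ ν ∈ E, ∀ σ ∈ X, IsFaceOf ν σ →
    ∃ ζ ∈ X, σ = coneHull (ζ ∪ ν) ∧ coneDim σ = coneDim ζ + 1

/-- A subdivision of a fan: a fan with the same support, every cone of which is contained in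
a cone of the base. -/
def IsSubdivision (X' X : Set (Set (V n))) : Prop :=
  IsFan X' ∧ support X' = support X ∧ ∀ σ' ∈ X', ∃ σ ∈ X, σ' ⊆ σ

/-- A subdivision is efficient if it introduces no new rays. -/
def IsEfficient (X' X : Set (Set (V n))) : Prop := raysIn X' = raysIn X

/-- `ψ` is a good (convex piecewise-linear) function for the subdivision `X'` relative to the
cones of the base fan `X`: on each cone `τ` of `X`, `ψ` is convex, linear on each cone of
`X'` contained in `τ`, and the maximal subcones of linearity of `ψ` inside `τ` are exactly
the cones of `X'` (i.e. any convex subset of `τ` on which `ψ` is linear lies in one of them). -/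
def IsGoodFor (X X' : Set (Set (V n))) (ψ : V n → ℚ) : Prop :=
  ∀ τ ∈ X, ConvexOn ℚ τ ψ ∧
    (∀ σ' ∈ X', σ' ⊆ τ → ∃ m : (V n) →ₗ[ℚ] ℚ, ∀ x ∈ σ', ψ x = m x) ∧
    (∀ (m : (V n) →ₗ[ℚ] ℚ) (t : Set (V n)), t ⊆ τ → Convex ℚ t →
      (∀ x ∈ t, ψ x = m x) → ∃ σ' ∈ X', σ' ⊆ τ ∧ t ⊆ σ')

/-- Sign conditions of a good sorting function with respect to the quadruple data on `X'`. -/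
def SignedOn (X' B' C' H' : Set (Set (V n))) (ψ : V n → ℚ) : Prop :=
  (∀ ν ∈ B', ∀ x ∈ ν, 0 ≤ ψ x) ∧ (∀ ν ∈ C', ∀ x ∈ ν, ψ x ≤ 0) ∧
  (∀ ν ∈ raysIn X', ν ∉ B' → ν ∉ C' → ν ∉ H' → ∀ x ∈ ν, ψ x = 0)

/-- Sign conditions restricted to the rays contained in a cone `τ`. -/
def SignedOnIn (τ : Set (V n)) (X' B' C' H' : Set (Set (V n))) (ψ : V n → ℚ) : Prop :=
  (∀ ν ∈ B', ν ⊆ τ → ∀ x ∈ ν, 0 ≤ ψ x) ∧ (∀ ν ∈ C', ν ⊆ τ → ∀ x ∈ ν, ψ x ≤ 0) ∧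
  (∀ ν ∈ raysIn X', ν ⊆ τ → ν ∉ B' → ν ∉ C' → ν ∉ H' → ∀ x ∈ ν, ψ x = 0)

/-- A convex subdivision, with respect to a fan quadruple structure on `X'`. -/
def IsConvexSubdiv (X' X B' C' H' : Set (Set (V n))) : Prop :=
  IsSubdivision X' X ∧ ∃ ψ : V n → ℚ, IsGoodFor X X' ψ ∧ SignedOn X' B' C' H' ψ

/-- A locally-convex subdivision: for each cone of the base there is a good sorting function
on that cone. -/
def IsLocallyConvexSubdiv (X' X B' C' H' : Set (Set (V n))) : Prop :=
  IsSubdivision X' X ∧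
    ∀ τ ∈ X, ∃ ψ : V n → ℚ, IsGoodFor {τ} X' ψ ∧ SignedOnIn τ X' B' C' H' ψ

/-- Star subdivision of `X` at a ray `ν` contained in the support of `X`. -/
def starSubdiv (X : Set (Set (V n))) (ν : Set (V n)) : Set (Set (V n)) :=
  {σ | σ ∈ X ∧ ¬ ν ⊆ σ} ∪
  {τ | ∃ σ ∈ X, ν ⊆ σ ∧ ∃ ξ, IsFaceOf ξ σ ∧ ¬ ν ⊆ ξ ∧ τ = coneHull (ξ ∪ ν)}

/-- The set `S` of facets used in the extension construction `Ext(𝔗, ν)`. -/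
noncomputable def extS (τ ν : Set (V n)) : Set (Set (V n)) :=
  if coneDim (coneHull (τ ∪ ν)) = coneDim τ + 1 then {τ}
  else {ζ | (IsFaceOf ζ τ ∧ coneDim ζ + 1 = coneDim τ) ∧
    ∃ m : (V n) →ₗ[ℚ] ℚ, (∀ x ∈ ζ, m x = 0) ∧ (∃ v ∈ ν, v ≠ 0 ∧ m v = -1) ∧
      ∀ x ∈ τ, x ∉ ζ → 0 < m x}

/-- All faces of cones of `extS τ ν`. -/
noncomputable def extFaces (τ ν : Set (V n)) : Set (Set (V n)) :=
  {ξ | ∃ ζ ∈ extS τ ν, IsFaceOf ξ ζ}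

/-- The extension `Ext(𝔗, ν)` of the affine fan of `τ` by the ray `ν`. -/
noncomputable def Ext (τ ν : Set (V n)) : Set (Set (V n)) :=
  {ν} ∪ faces τ ∪ (fun ξ => coneHull (ξ ∪ ν)) '' extFaces τ ν

/-- The extension `Ext(𝔗', ν)` of a subdivision `𝒯'` of the affine fan of `τ` by the ray
`ν`. -/
noncomputable def ExtSub (T' : Set (Set (V n))) (τ ν : Set (V n)) : Set (Set (V n)) :=
  {ν} ∪ T' ∪ (fun ξ => coneHull (ξ ∪ ν)) ''
    {ξ | ∃ ζ' ∈ T', (∃ ζ ∈ extS τ ν, ζ' ⊆ ζ) ∧ IsFaceOf ξ ζ'}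

/-- Sequential convexity of a sequence of star subdivisions (the list gives the rays in the
order in which the star subdivisions are performed). -/
def SeqConvex (B C H : Set (Set (V n))) : Set (Set (V n)) → List (Set (V n)) → Prop
  | _, [] => True
  | X, ν :: rest =>
      IsLocallyConvexSubdiv (starSubdiv X ν) X B C H ∧
      SeqConvex B C H (starSubdiv X ν) rest

/-- The annihilator of a set `s ⊆ ℚ^n` in the dual space. -/
def perpOf (s : Set (V n)) : Submodule ℚ (Module.Dual ℚ (V n)) where
  carrier := {m | ∀ x ∈ s, m x = 0}
  add_mem' := by
    intro a b ha hb x hx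
    simp [LinearMap.add_apply, ha x hx, hb x hx]
  zero_mem' := by
    intro x hx
    rfl
  smul_mem' := by
    intro c a ha x hx
    simp [LinearMap.smul_apply, ha x hx]

open Classical in
/-- The map `φ` attached to a fan triple: `φ(ζ) = 0` if some ray of `ζ` lies in `B`, and
otherwise `φ(ζ) = ⋂ { ν^⊥ : ν a ray of ζ, ν ∉ B ∪ C }`. -/
noncomputable def phiMap (B C : Set (Set (V n))) (ζ : Set (V n)) :
    Submodule ℚ (Module.Dual ℚ (V n)) :=
  if ∃ ν ∈ B, IsRayOf ν ζ then ⊥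
  else ⨅ ν ∈ {ν | IsRayOf ν ζ ∧ ν ∉ B ∪ C}, perpOf ν

/-!
Since its support `τ` is full-dimensional, the fan `𝔛'` is pure, so every ray `ν` of `ζ` lies in
some `τᵢ` and is then a ray of `Ξᵢ(ζ)`. This settles the case where `ζ` has a ray in `𝔅 ⊆ 𝔅'`.
Otherwise condition (i) shows that no `Ξᵢ(ζ)` has a ray in `𝔅'` and, with (ii), that a ray of `ζ`
outside `𝔅 ∪ ℭ` lies outside `𝔅' ∪ ℭ'`, whence `⋂ᵢ φᵢ(Ξᵢ(ζ)) ⊆ φ(ζ)`. Conversely, if `ν'` is a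
ray of some `Ξᵢ(ζ)` outside `𝔅' ∪ ℭ'`, condition (iv) shows that the smallest face of `τ`
containing `ν'` has no ray in `𝔅 ∪ ℭ`; as a strongly convex cone is spanned by its rays, every
functional in `φ(ζ)` vanishes on that face, hence on `ν'`.
-/

section ConeHull

theorem coneHull_eq_hull (A : Set (V n)) : coneHull A = (PointedCone.hull ℚ A : Set (V n)) := by
  ext x
  constructor
  · rintro ⟨t, ht, c, hc, rfl⟩
    exact Submodule.sum_mem _ fun v hv =>
      PointedCone.smul_mem _ (hc v hv) (PointedCone.subset_hull (ht hv))
  · intro hx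
    obtain ⟨c, hcA, hc, rfl⟩ := PointedCone.mem_hull_set.mp hx
    exact ⟨c.support, hcA, c, fun v _ => hc v, rfl⟩

theorem subset_coneHull (A : Set (V n)) : A ⊆ coneHull A := by
  rw [coneHull_eq_hull]
  exact PointedCone.subset_hull

theorem coneHull_mono {A B : Set (V n)} (h : A ⊆ B) : coneHull A ⊆ coneHull B := by
  rw [coneHull_eq_hull, coneHull_eq_hull]
  exact Submodule.span_mono h

theorem coneHull_empty : coneHull (∅ : Set (V n)) = {0} := by
  simp [coneHull_eq_hull]

theorem mem_coneHull_insert_iff {A : Set (V n)} {v x : V n} :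
    x ∈ coneHull (insert v A) ↔ ∃ r : ℚ, 0 ≤ r ∧ x - r • v ∈ coneHull A := by
  rw [coneHull_eq_hull, coneHull_eq_hull, SetLike.mem_coe, Submodule.mem_span_insert]
  constructor
  · rintro ⟨a, z, hz, rfl⟩
    exact ⟨a, a.2, by simpa using hz⟩
  · rintro ⟨r, hr, hz⟩
    exact ⟨⟨r, hr⟩, _, hz, by simp⟩

theorem IsPolyCone.smul_mem {σ : Set (V n)} (hσ : IsPolyCone σ) {x : V n} (hx : x ∈ σ)
    {r : ℚ} (hr : 0 ≤ r) : r • x ∈ σ := by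
  obtain ⟨S, rfl⟩ := hσ
  rw [coneHull_eq_hull] at hx ⊢
  exact PointedCone.smul_mem _ hr hx

theorem IsPolyCone.convex {σ : Set (V n)} (hσ : IsPolyCone σ) : Convex ℚ σ := by
  obtain ⟨S, rfl⟩ := hσ
  rw [coneHull_eq_hull]
  exact PointedCone.convex _

theorem nonneg_of_mem_coneHull {A : Set (V n)} {m : Module.Dual ℚ (V n)}
    (hm : ∀ v ∈ A, 0 ≤ m v) {x : V n} (hx : x ∈ coneHull A) : 0 ≤ m x := by
  obtain ⟨t, ht, c, hc, rfl⟩ := hx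
  rw [map_sum]
  exact Finset.sum_nonneg fun v hv => by
    rw [map_smul, smul_eq_mul]; exact mul_nonneg (hc v hv) (hm v (ht hv))

theorem coneHull_sep_eq {A : Set (V n)} {m : Module.Dual ℚ (V n)} (hm : ∀ v ∈ A, 0 ≤ m v) :
    {x ∈ coneHull A | m x = 0} = coneHull (A ∩ {v | m v = 0}) := by
  ext x
  constructor
  · rintro ⟨⟨t, ht, c, hc, rfl⟩, hx0⟩
    simp only [map_sum, map_smul, smul_eq_mul] at hx0
    have hterm := (Finset.sum_eq_zero_iff_of_nonneg fun v hv =>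
      mul_nonneg (hc v hv) (hm v (ht hv))).mp hx0
    refine ⟨t.filter (m · = 0), fun v hv => ?_, c, fun v hv => hc v (Finset.mem_filter.mp hv).1, ?_⟩
    · rw [Finset.coe_filter] at hv
      exact ⟨ht hv.1, hv.2⟩
    · rw [Finset.sum_filter]
      refine Finset.sum_congr rfl fun v hv => ?_
      split_ifs with h
      · rfl
      · rw [(mul_eq_zero.mp (hterm v hv)).resolve_right h, zero_smul]
  · intro hx
    refine ⟨coneHull_mono Set.inter_subset_left hx, ?_⟩
    obtain ⟨t, ht, c, -, rfl⟩ := hx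
    simp only [map_sum, map_smul, smul_eq_mul]
    exact Finset.sum_eq_zero fun v hv => by rw [(ht hv).2, mul_zero]

end ConeHull

section FourierMotzkin

variable {M : Type*} [AddCommGroup M] [Module ℚ M]

theorem exists_nonneg_mul_le {ι : Type*} (s : Finset ι) (a b : ι → ℚ)
    (hnonneg : ∀ i ∈ s, 0 ≤ b i → 0 ≤ a i)
    (hpair : ∀ i ∈ s, ∀ j ∈ s, 0 < b i → b j < 0 → 0 ≤ b i * a j - b j * a i) :
    ∃ r : ℚ, 0 ≤ r ∧ ∀ i ∈ s, r * b i ≤ a i := by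
  by_cases hpos : ∃ i ∈ s, 0 < b i
  · obtain ⟨i₀, hi₀, hmin⟩ := (s.filter (0 < b ·)).exists_min_image (fun i => a i / b i)
      (by simpa [Finset.filter_nonempty_iff] using hpos)
    obtain ⟨hi₀s, hb₀⟩ := Finset.mem_filter.mp hi₀
    refine ⟨a i₀ / b i₀, div_nonneg (hnonneg i₀ hi₀s hb₀.le) hb₀.le, fun i hi => ?_⟩
    rcases lt_trichotomy (b i) 0 with hb | hb | hb
    · have := hpair i₀ hi₀s i hi hb₀ hb
      rw [div_mul_eq_mul_div, div_le_iff₀ hb₀]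
      linarith
    · simpa [hb] using hnonneg i hi hb.ge
    · rw [← le_div_iff₀ hb]
      exact hmin i (Finset.mem_filter.mpr ⟨hi, hb⟩)
  · push Not at hpos
    refine ⟨∑ j ∈ s, |a j / b j|, Finset.sum_nonneg fun j _ => abs_nonneg _, fun i hi => ?_⟩
    rcases (hpos i hi).lt_or_eq with hb | hb
    · rw [← div_le_iff_of_neg hb]
      exact (le_abs_self _).trans (Finset.single_le_sum (fun j _ => abs_nonneg (a j / b j)) hi)
    · simpa [hb] using hnonneg i hi hb.ge

open Classical in
noncomputable def fourierMotzkin (L : Finset (Module.Dual ℚ M)) (v : M) :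
    Finset (Module.Dual ℚ M) :=
  L.filter (fun ℓ => 0 ≤ ℓ v) ∪
    ((L ×ˢ L).filter fun p => 0 < p.1 v ∧ p.2 v < 0).image fun p => p.1 v • p.2 - p.2 v • p.1

theorem exists_sub_smul_nonneg_iff (L : Finset (Module.Dual ℚ M)) (v x : M) :
    (∃ r : ℚ, 0 ≤ r ∧ ∀ ℓ ∈ L, 0 ≤ ℓ (x - r • v)) ↔ ∀ ℓ ∈ fourierMotzkin L v, 0 ≤ ℓ x := by
  classical
  simp only [fourierMotzkin, Finset.mem_union, Finset.mem_filter, Finset.mem_image,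
    Finset.mem_product, map_sub, map_smul, smul_eq_mul, sub_nonneg]
  constructor
  · rintro ⟨r, hr, h⟩ ℓ (⟨hℓ, hv⟩ | ⟨⟨ℓ₁, ℓ₂⟩, ⟨⟨h₁, h₂⟩, hv₁, hv₂⟩, rfl⟩)
    · nlinarith [h ℓ hℓ]
    · simp only [LinearMap.sub_apply, LinearMap.smul_apply, smul_eq_mul]
      nlinarith [h ℓ₁ h₁, h ℓ₂ h₂]
  · intro h
    refine exists_nonneg_mul_le L (fun ℓ => ℓ x) (fun ℓ => ℓ v)
      (fun ℓ hℓ hv => h ℓ (Or.inl ⟨hℓ, hv⟩)) fun ℓ₁ h₁ ℓ₂ h₂ hv₁ hv₂ => ?_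
    have := h _ (Or.inr ⟨(ℓ₁, ℓ₂), ⟨⟨h₁, h₂⟩, hv₁, hv₂⟩, rfl⟩)
    simpa [LinearMap.sub_apply, LinearMap.smul_apply, smul_eq_mul] using this

end FourierMotzkin

section HalfspaceRepresentation

theorem exists_finset_dual_eq_zero :
    ∃ L : Finset (Module.Dual ℚ (V n)), ({0} : Set (V n)) = {x | ∀ ℓ ∈ L, 0 ≤ ℓ x} := by
  classical
  refine ⟨Finset.univ.image (fun i => LinearMap.proj i) ∪
    Finset.univ.image (fun i => -LinearMap.proj i), Set.ext fun x => ?_⟩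
  simp only [Set.mem_singleton_iff, Set.mem_ofPred_eq, Finset.mem_union, Finset.mem_image,
    Finset.mem_univ, true_and]
  constructor
  · rintro rfl ℓ (⟨i, rfl⟩ | ⟨i, rfl⟩) <;> simp
  · intro h
    funext i
    have h₁ := h _ (Or.inl ⟨i, rfl⟩)
    have h₂ := h _ (Or.inr ⟨i, rfl⟩)
    simp only [LinearMap.neg_apply, LinearMap.proj_apply, Left.nonneg_neg_iff] at h₁ h₂
    exact le_antisymm h₂ h₁

theorem exists_finset_dual_eq_coneHull (S : Finset (V n)) :
    ∃ L : Finset (Module.Dual ℚ (V n)), coneHull (S : Set (V n)) = {x | ∀ ℓ ∈ L, 0 ≤ ℓ x} := by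
  classical
  induction S using Finset.induction_on with
  | empty => simpa [coneHull_empty] using exists_finset_dual_eq_zero
  | insert v S _ ih =>
    obtain ⟨L, hL⟩ := ih
    refine ⟨fourierMotzkin L v, Set.ext fun x => ?_⟩
    rw [Finset.coe_insert, mem_coneHull_insert_iff, hL, Set.mem_ofPred_eq,
      ← exists_sub_smul_nonneg_iff]
    rfl

theorem IsPolyCone.exists_finset_dual_eq {σ : Set (V n)} (hσ : IsPolyCone σ) :
    ∃ L : Finset (Module.Dual ℚ (V n)), σ = {x | ∀ ℓ ∈ L, 0 ≤ ℓ x} := by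
  obtain ⟨S, rfl⟩ := hσ
  exact exists_finset_dual_eq_coneHull S

end HalfspaceRepresentation

section Boundary

theorem IsPolyCone.exists_exit {σ : Set (V n)} (hσ : IsPolyCone σ) {x z : V n} (hx : x ∈ σ)
    (hz : z ∉ σ) : ∃ t : ℚ, 0 ≤ t ∧ ∃ ℓ : Module.Dual ℚ (V n), (∀ y ∈ σ, 0 ≤ ℓ y) ∧
      x + t • z ∈ σ ∧ ℓ (x + t • z) = 0 ∧ ℓ z < 0 := by
  classical
  obtain ⟨L, rfl⟩ := hσ.exists_finset_dual_eq
  simp only [Set.mem_ofPred_eq, not_forall, not_le] at hx hz ⊢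
  obtain ⟨ℓ₀, hℓ₀, hmin⟩ := (L.filter (· z < 0)).exists_min_image (fun ℓ => ℓ x / -ℓ z)
    (by simpa [Finset.filter_nonempty_iff] using hz)
  obtain ⟨hℓ₀L, hℓ₀z⟩ := Finset.mem_filter.mp hℓ₀
  have hpos : 0 < -ℓ₀ z := neg_pos.mpr hℓ₀z
  refine ⟨ℓ₀ x / -ℓ₀ z, div_nonneg (hx ℓ₀ hℓ₀L) hpos.le, ℓ₀, fun y hy => hy ℓ₀ hℓ₀L,
    fun ℓ hℓ => ?_, ?_, hℓ₀z⟩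
  · simp only [map_add, map_smul, smul_eq_mul]
    rcases le_or_gt 0 (ℓ z) with hℓz | hℓz
    · exact add_nonneg (hx ℓ hℓ) (mul_nonneg (div_nonneg (hx ℓ₀ hℓ₀L) hpos.le) hℓz)
    · have := hmin ℓ (Finset.mem_filter.mpr ⟨hℓ, hℓz⟩)
      rw [le_div_iff₀ (neg_pos.mpr hℓz)] at this
      linarith
  · simp only [map_add, map_smul, smul_eq_mul]
    rw [div_mul_eq_mul_div, mul_div_assoc, div_neg, div_self hℓ₀z.ne]
    ring

theorem nonneg_of_infinite_setOf_nonneg {a b : ℚ}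
    (h : {k : ℕ | 0 ≤ a + ((k : ℚ) + 1)⁻¹ * b}.Infinite) : 0 ≤ a := by
  by_contra ha
  push Not at ha
  obtain ⟨k, hk, hlt⟩ := h.exists_gt ⌈|b| / -a⌉₊
  have hk1 : (0 : ℚ) < k + 1 := by positivity
  have hbound : |b| / -a < k + 1 :=
    (Nat.le_ceil _).trans_lt (by exact_mod_cast hlt.trans (Nat.lt_succ_self k))
  rw [div_lt_iff₀ (neg_pos.mpr ha)] at hbound
  have : 0 ≤ (k + 1) * a + b := by
    have := mul_nonneg hk1.le hk
    rwa [mul_add, ← mul_assoc, mul_inv_cancel₀ hk1.ne', one_mul] at this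
  linarith [le_abs_self b]

theorem IsPolyCone.mem_of_infinite_setOf_mem {σ : Set (V n)} (hσ : IsPolyCone σ) {y w : V n}
    (h : {k : ℕ | y + ((k : ℚ) + 1)⁻¹ • w ∈ σ}.Infinite) : y ∈ σ := by
  obtain ⟨L, rfl⟩ := hσ.exists_finset_dual_eq
  intro ℓ hℓ
  refine nonneg_of_infinite_setOf_nonneg (b := ℓ w) (h.mono fun k hk => ?_)
  simpa using hk ℓ hℓ

end Boundary

section Faces

theorem IsFaceOf.subset {F σ : Set (V n)} (h : IsFaceOf F σ) : F ⊆ σ := by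
  obtain ⟨m, -, rfl⟩ := h
  exact Set.sep_subset _ _

theorem isFaceOf_self (σ : Set (V n)) : IsFaceOf σ σ :=
  ⟨0, fun _ _ => le_rfl, by simp⟩

theorem IsFaceOf.inter {F G σ : Set (V n)} (hF : IsFaceOf F σ) (hG : IsFaceOf G σ) :
    IsFaceOf (F ∩ G) σ := by
  obtain ⟨m₁, hm₁, rfl⟩ := hF
  obtain ⟨m₂, hm₂, rfl⟩ := hG
  refine ⟨m₁ + m₂, fun x hx => add_nonneg (hm₁ x hx) (hm₂ x hx), Set.ext fun x => ?_⟩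
  simp only [Set.mem_inter_iff, Set.mem_ofPred_eq, LinearMap.add_apply]
  constructor
  · rintro ⟨⟨hx, h₁⟩, -, h₂⟩
    exact ⟨hx, by rw [h₁, h₂, add_zero]⟩
  · rintro ⟨hx, h⟩
    have := hm₁ x hx
    have := hm₂ x hx
    exact ⟨⟨hx, by linarith⟩, hx, by linarith⟩

theorem IsFaceOf.restrict {F G σ : Set (V n)} (hF : IsFaceOf F σ) (hFG : F ⊆ G) (hGσ : G ⊆ σ) :
    IsFaceOf F G := by
  obtain ⟨m, hm, rfl⟩ := hF
  exact ⟨m, fun x hx => hm x (hGσ hx),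
    Set.ext fun x => ⟨fun h => ⟨hFG h, h.2⟩, fun h => ⟨hGσ h.1, h.2⟩⟩⟩

theorem IsFaceOf.exists_subset_eq_coneHull {F : Set (V n)} {S : Finset (V n)}
    (hF : IsFaceOf F (coneHull S)) : ∃ t ⊆ S, F = coneHull t := by
  classical
  obtain ⟨m, hm, rfl⟩ := hF
  refine ⟨S.filter (m · = 0), Finset.filter_subset _ _, ?_⟩
  rw [coneHull_sep_eq fun v hv => hm v (subset_coneHull _ hv), Finset.coe_filter]
  rfl

theorem IsFaceOf.isPolyCone {F σ : Set (V n)} (hF : IsFaceOf F σ) (hσ : IsPolyCone σ) :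
    IsPolyCone F := by
  obtain ⟨S, rfl⟩ := hσ
  obtain ⟨t, -, rfl⟩ := hF.exists_subset_eq_coneHull
  exact ⟨t, rfl⟩

theorem IsPolyCone.finite_faces {σ : Set (V n)} (hσ : IsPolyCone σ) : (faces σ).Finite := by
  obtain ⟨S, rfl⟩ := hσ
  refine (S.powerset.finite_toSet.image fun t : Finset (V n) => coneHull (t : Set (V n))).subset
    fun F hF => ?_
  obtain ⟨t, ht, rfl⟩ := IsFaceOf.exists_subset_eq_coneHull hF
  exact ⟨t, Finset.mem_powerset.mpr ht, rfl⟩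

theorem exists_add_mul_pos {ι : Type*} (s : Finset ι) (a b : ι → ℚ) :
    ∃ N : ℚ, ∀ i ∈ s, 0 < a i → 0 < b i + N * a i := by
  refine ⟨1 + ∑ j ∈ s, |b j / a j|, fun i hi ha => ?_⟩
  have hle : |b i / a i| ≤ ∑ j ∈ s, |b j / a j| :=
    Finset.single_le_sum (fun j _ => abs_nonneg (b j / a j)) hi
  have hmul : |b i / a i| * a i = |b i| := by
    rw [abs_div, abs_of_pos ha, div_mul_cancel₀ _ ha.ne']
  nlinarith [neg_abs_le (b i)]

theorem IsFaceOf.trans {G F σ : Set (V n)} (hGF : IsFaceOf G F) (hFσ : IsFaceOf F σ)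
    (hσ : IsPolyCone σ) : IsFaceOf G σ := by
  obtain ⟨S, rfl⟩ := hσ
  obtain ⟨m₁, hm₁, rfl⟩ := hFσ
  obtain ⟨m₂, hm₂, rfl⟩ := hGF
  have hS₁ : ∀ v ∈ (S : Set (V n)), 0 ≤ m₁ v := fun v hv => hm₁ v (subset_coneHull _ hv)
  rw [coneHull_sep_eq hS₁] at hm₂ ⊢
  have hS₂ : ∀ v ∈ (S : Set (V n)), m₁ v = 0 → 0 ≤ m₂ v :=
    fun v hv h => hm₂ v (subset_coneHull _ ⟨hv, h⟩)
  rw [coneHull_sep_eq fun v hv => hS₂ v hv.1 hv.2]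
  -- a large multiple of `m₁` makes `m₂` positive on the generators outside `F`
  obtain ⟨N, hN⟩ := exists_add_mul_pos S m₁ m₂
  have hS : ∀ v ∈ (S : Set (V n)),
      0 ≤ (m₂ + N • m₁) v ∧ ((m₂ + N • m₁) v = 0 ↔ m₁ v = 0 ∧ m₂ v = 0) := by
    intro v hv
    simp only [LinearMap.add_apply, LinearMap.smul_apply, smul_eq_mul]
    rcases (hS₁ v hv).lt_or_eq with h | h
    · have := hN v hv h
      exact ⟨this.le, by constructor <;> intro <;> linarith⟩
    · rw [← h, mul_zero, add_zero]
      exact ⟨hS₂ v hv h.symm, by simp [h]⟩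
  refine ⟨m₂ + N • m₁, fun x hx => nonneg_of_mem_coneHull (fun v hv => (hS v hv).1) hx, ?_⟩
  rw [coneHull_sep_eq fun v hv => (hS v hv).1]
  congr 1
  ext v
  simp only [Set.mem_inter_iff, Set.mem_ofPred_eq]
  constructor
  · rintro ⟨⟨hv, h₁⟩, h₂⟩
    exact ⟨hv, (hS v hv).2.mpr ⟨h₁, h₂⟩⟩
  · rintro ⟨hv, h⟩
    exact ⟨⟨hv, ((hS v hv).2.mp h).1⟩, ((hS v hv).2.mp h).2⟩

theorem exists_least_face {τ ζ s : Set (V n)} (hτ : IsPolyCone τ) (hζ : IsFaceOf ζ τ)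
    (hs : s ⊆ ζ) : ∃ F, IsFaceOf F τ ∧ s ⊆ F ∧ (∀ G, IsFaceOf G τ → s ⊆ G → F ⊆ G) ∧
      IsFaceOf F ζ := by
  have hfin : {G | IsFaceOf G τ ∧ s ⊆ G}.Finite := hτ.finite_faces.subset fun G hG => hG.1
  obtain ⟨F, ⟨hF, hsF⟩, hFmin⟩ := hfin.exists_minimal ⟨ζ, hζ, hs⟩
  have hleast : ∀ G, IsFaceOf G τ → s ⊆ G → F ⊆ G := fun G hG hsG =>
    (hFmin ⟨hF.inter hG, Set.subset_inter hsF hsG⟩ Set.inter_subset_left).trans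
      Set.inter_subset_right
  exact ⟨F, hF, hsF, hleast, hF.restrict (hleast ζ hζ hs) hζ.subset⟩

end Faces

section Rays

theorem StronglyConvex.mono {σ τ : Set (V n)} (hσ : StronglyConvex σ) (hτσ : τ ⊆ σ) :
    StronglyConvex τ :=
  fun x hx hnx => hσ x (hτσ hx) (hτσ hnx)

theorem coneDim_le (σ : Set (V n)) : coneDim σ ≤ n := by
  simpa [coneDim] using Submodule.finrank_le (Submodule.span ℚ σ)

theorem coneDim_lt_of_notMem_span {A B : Set (V n)} (h : A ⊆ B) {p : V n} (hp : p ∈ B)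
    (hpA : p ∉ Submodule.span ℚ A) : coneDim A < coneDim B :=
  Submodule.finrank_lt_finrank_of_lt <| lt_of_le_of_ne (Submodule.span_mono h)
    fun he => hpA (he ▸ Submodule.subset_span hp)

theorem IsRayOf.trans {ν F σ : Set (V n)} (hν : IsRayOf ν F) (hF : IsFaceOf F σ)
    (hσ : IsPolyCone σ) : IsRayOf ν σ :=
  ⟨hν.1.trans hF hσ, hν.2⟩

theorem IsRayOf.restrict {ν G σ : Set (V n)} (hν : IsRayOf ν σ) (hνG : ν ⊆ G) (hGσ : G ⊆ σ) :
    IsRayOf ν G :=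
  ⟨hν.1.restrict hνG hGσ, hν.2⟩

theorem IsRayOf.exists_ne_zero {ν σ : Set (V n)} (hν : IsRayOf ν σ) : ∃ x ∈ ν, x ≠ 0 := by
  by_contra! h
  have := hν.2
  rw [coneDim, Submodule.span_eq_bot.mpr h, finrank_bot] at this
  exact zero_ne_one this

theorem IsRayOf.subset_of_mem {ν σ σ' : Set (V n)} (hσ : IsPolyCone σ) (hsc : StronglyConvex σ)
    (hν : IsRayOf ν σ) {x : V n} (hx : x ∈ ν) (hx0 : x ≠ 0) (hσ' : IsPolyCone σ')
    (hxσ' : x ∈ σ') : ν ⊆ σ' := by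
  have hspan : Submodule.span ℚ {x} = Submodule.span ℚ ν :=
    Submodule.eq_of_le_of_finrank_le (Submodule.span_mono (Set.singleton_subset_iff.mpr hx))
      (by rw [finrank_span_singleton hx0]; exact hν.2.le)
  intro y hy
  obtain ⟨c, rfl⟩ := Submodule.mem_span_singleton.mp (hspan ▸ Submodule.subset_span hy)
  rcases le_or_gt 0 c with hc | hc
  · exact hσ'.smul_mem hxσ' hc
  · have hneg : -x ∈ ν := by
      have := (hν.1.isPolyCone hσ).smul_mem hy (neg_nonneg.mpr (inv_nonpos.mpr hc.le))
      rwa [smul_smul, neg_mul, inv_mul_cancel₀ hc.ne, neg_one_smul] at this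
    exact absurd (hsc x (hν.1.subset hx) (hν.1.subset hneg)) hx0

end Rays

section Minkowski

theorem mem_of_sub_smul_mem_of_sub_smul_mem {K M : Type*} [Field K] [AddCommGroup M]
    [Module K M] {W : Submodule K M} {x v : M} {t t' : K} (hx : x - t • v ∈ W)
    (hv : v - t' • x ∈ W) (htt' : t * t' ≠ 1) : x ∈ W := by
  have : (1 - t * t') • x = (x - t • v) + t • (v - t' • x) := by module
  rw [← W.smul_mem_iff (sub_ne_zero.mpr htt'.symm), this]
  exact W.add_mem hx (W.smul_mem t hv)

theorem StronglyConvex.mem_span_singleton_of_sub_smul_mem {σ : Set (V n)}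
    (hsc : StronglyConvex σ) (hσ : IsPolyCone σ) {x v : V n} {t t' : ℚ} (hx : x - t • v ∈ σ)
    (hv : v - t' • x ∈ σ) (ht : 0 ≤ t) (htt' : t * t' = 1) : v ∈ Submodule.span ℚ {x} := by
  have hneg : -(x - t • v) = t • (v - t' • x) := by
    rw [smul_sub, smul_smul, htt', one_smul, neg_sub]
  have hxv : x = t • v := sub_eq_zero.mp (hsc _ hx (hneg ▸ hσ.smul_mem hv ht))
  refine Submodule.mem_span_singleton.mpr ⟨t⁻¹, ?_⟩
  rw [hxv, smul_smul, inv_mul_cancel₀ (left_ne_zero_of_mul_eq_one htt'), one_smul]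

theorem IsPolyCone.exists_sub_smul_mem_face {σ : Set (V n)} (hσ : IsPolyCone σ)
    (hsc : StronglyConvex σ) {w u : V n} (hw : w ∈ σ) (hu : u ∈ σ) (hu0 : u ≠ 0) :
    ∃ t : ℚ, 0 ≤ t ∧ ∃ F, IsFaceOf F σ ∧ coneDim F < coneDim σ ∧ w - t • u ∈ F := by
  obtain ⟨t, ht, ℓ, hℓ, hmem, hzero, hneg⟩ :=
    hσ.exists_exit hw (z := -u) fun h => hu0 (hsc u hu h)
  rw [smul_neg, ← sub_eq_add_neg] at hmem hzero
  rw [map_neg, neg_neg_iff_pos] at hneg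
  refine ⟨t, ht, {y ∈ σ | ℓ y = 0}, ⟨ℓ, hℓ, rfl⟩,
    coneDim_lt_of_notMem_span (Set.sep_subset _ _) hu fun hspan => ?_, hmem, hzero⟩
  have : Submodule.span ℚ {y ∈ σ | ℓ y = 0} ≤ LinearMap.ker ℓ :=
    Submodule.span_le.mpr fun y hy => hy.2
  exact hneg.ne' (this hspan)

theorem subset_span_rays {σ : Set (V n)} (hσ : IsPolyCone σ) (hsc : StronglyConvex σ) :
    σ ⊆ Submodule.span ℚ (⋃₀ raysOf σ) := by
  induction hd : coneDim σ using Nat.strong_induction_on generalizing σ with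
  | _ d ih =>
  have hface : ∀ F, IsFaceOf F σ → coneDim F < d → F ⊆ Submodule.span ℚ (⋃₀ raysOf σ) :=
    fun F hF hlt => (ih _ hlt (hF.isPolyCone hσ) (hsc.mono hF.subset) rfl).trans
      (Submodule.span_mono (Set.sUnion_subset_sUnion fun ν (hν : IsRayOf ν F) => hν.trans hF hσ))
  intro x hx
  by_cases hx0 : x = 0
  · simp [hx0]
  by_cases hσx : σ ⊆ Submodule.span ℚ {x}
  · refine Submodule.subset_span ⟨σ, ⟨isFaceOf_self σ, le_antisymm ?_ ?_⟩, hx⟩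
    · exact (Submodule.finrank_mono (Submodule.span_le.mpr hσx)).trans
        (finrank_span_singleton hx0).le
    · exact (finrank_span_singleton hx0).ge.trans
        (Submodule.finrank_mono (Submodule.span_mono (Set.singleton_subset_iff.mpr hx)))
  obtain ⟨v, hv, hvx⟩ := Set.not_subset.mp hσx
  have hv0 : v ≠ 0 := fun h => hvx (h ▸ Submodule.zero_mem _)
  -- `x` is a combination of a point of a proper face reached from `x` against `v`
  -- and a point of a proper face reached from `v` against `x`
  obtain ⟨t, ht, F, hF, hFlt, hxF⟩ := hσ.exists_sub_smul_mem_face hsc hx hv hv0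
  obtain ⟨t', -, F', hF', hF'lt, hvF'⟩ := hσ.exists_sub_smul_mem_face hsc hv hx hx0
  exact mem_of_sub_smul_mem_of_sub_smul_mem (hface F hF (hd ▸ hFlt) hxF)
    (hface F' hF' (hd ▸ hF'lt) hvF') fun htt' =>
      hvx (hsc.mem_span_singleton_of_sub_smul_mem hσ (hF.subset hxF) (hF'.subset hvF') ht htt')

theorem eq_zero_of_forall_isRayOf {σ : Set (V n)} (hσ : IsPolyCone σ) (hsc : StronglyConvex σ)
    {m : Module.Dual ℚ (V n)} (hm : ∀ ν, IsRayOf ν σ → ∀ x ∈ ν, m x = 0) {x : V n}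
    (hx : x ∈ σ) : m x = 0 :=
  Submodule.span_le.mpr (fun _ ⟨ν, hν, hy⟩ => hm ν hν _ hy : ⋃₀ raysOf σ ⊆ LinearMap.ker m)
    (subset_span_rays hσ hsc hx)

end Minkowski

section Purity

theorem support_faces (τ : Set (V n)) : support (faces τ) = τ :=
  Set.Subset.antisymm (Set.sUnion_subset fun _ hF => IsFaceOf.subset hF)
    (Set.subset_sUnion_of_mem (isFaceOf_self τ))

theorem IsPolyCone.exists_mem_forall_isFaceOf {σ : Set (V n)} (hσ : IsPolyCone σ) :
    ∃ y ∈ σ, ∀ F, IsFaceOf F σ → y ∈ F → σ ⊆ F := by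
  obtain ⟨S, rfl⟩ := hσ
  refine ⟨∑ v ∈ S, v, ⟨S, subset_rfl, 1, fun _ _ => zero_le_one, by simp⟩, ?_⟩
  rintro F ⟨m, hm, rfl⟩ ⟨-, hy⟩
  have hS : ∀ v ∈ (S : Set (V n)), 0 ≤ m v := fun v hv => hm v (subset_coneHull _ hv)
  rw [map_sum] at hy
  have hzero := (Finset.sum_eq_zero_iff_of_nonneg hS).mp hy
  rw [coneHull_sep_eq hS]
  exact coneHull_mono fun v hv => ⟨hv, hzero v hv⟩

theorem exists_infinite_setOf_mem {α : Type*} {X : Set (Set α)} (hX : X.Finite) {p : ℕ → α}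
    (hp : ∀ k, p k ∈ ⋃₀ X) : ∃ σ ∈ X, {k | p k ∈ σ}.Infinite := by
  by_contra! h
  refine Set.infinite_univ ((hX.biUnion h).subset fun k _ => ?_)
  obtain ⟨σ, hσ, hk⟩ := hp k
  exact Set.mem_biUnion hσ hk

theorem exists_mem_notMem_span {σ τ : Set (V n)} (hfull : Submodule.span ℚ τ = ⊤)
    (hlt : coneDim σ < n) : ∃ w ∈ τ, w ∉ Submodule.span ℚ σ := by
  by_contra! h
  have htop : Submodule.span ℚ σ = ⊤ := eq_top_iff.mpr (hfull ▸ Submodule.span_le.mpr h)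
  rw [coneDim, htop, finrank_top, Module.finrank_fin_fun] at hlt
  exact lt_irrefl n hlt

/-- The segment from a relative interior point `y` of `σ` towards a point of `τ` outside the span
of `σ` starts inside a single cone `σ''` of the fan; `σ''` contains `y`, hence all of `σ`. -/
theorem IsFan.exists_superset_coneDim_lt {X : Set (Set (V n))} (hfan : IsFan X) {τ : Set (V n)}
    (hτ : IsPolyCone τ) (hsupp : support X = τ) (hfull : Submodule.span ℚ τ = ⊤)
    {σ : Set (V n)} (hσ : σ ∈ X) (hlt : coneDim σ < n) :
    ∃ σ'' ∈ X, σ ⊆ σ'' ∧ coneDim σ < coneDim σ'' := by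
  obtain ⟨y, hyσ, hy⟩ := (hfan.2.1 σ hσ).1.exists_mem_forall_isFaceOf
  obtain ⟨w, hwτ, hw⟩ := exists_mem_notMem_span hfull hlt
  have hyτ : y ∈ τ := hsupp ▸ Set.subset_sUnion_of_mem hσ hyσ
  have hp : ∀ k : ℕ, y + ((k : ℚ) + 1)⁻¹ • (w - y) ∈ support X := fun k =>
    hsupp ▸ hτ.convex.add_smul_sub_mem hyτ hwτ ⟨by positivity, inv_le_one_of_one_le₀ (by simp)⟩
  obtain ⟨σ'', hσ'', hinf⟩ := exists_infinite_setOf_mem hfan.1 hp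
  have hyσ'' : y ∈ σ'' := (hfan.2.1 σ'' hσ'').1.mem_of_infinite_setOf_mem hinf
  have hσσ'' : σ ⊆ σ'' :=
    (hy _ (hfan.2.2.2 σ hσ σ'' hσ'').1 ⟨hyσ, hyσ''⟩).trans Set.inter_subset_right
  obtain ⟨k, hk⟩ := hinf.nonempty
  refine ⟨σ'', hσ'', hσσ'', coneDim_lt_of_notMem_span hσσ'' hk fun hmem => hw ?_⟩
  have hyspan : y ∈ Submodule.span ℚ σ := Submodule.subset_span hyσ
  have := (Submodule.smul_mem_iff _ (by positivity)).mp
    ((Submodule.add_mem_iff_right _ hyspan).mp hmem)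
  simpa using Submodule.add_mem _ this hyspan

theorem IsFan.exists_superset_coneDim_eq {X : Set (Set (V n))} (hfan : IsFan X) {τ : Set (V n)}
    (hτ : IsPolyCone τ) (hsupp : support X = τ) (hfull : Submodule.span ℚ τ = ⊤)
    {σ : Set (V n)} (hσ : σ ∈ X) : ∃ σ' ∈ X, σ ⊆ σ' ∧ coneDim σ' = n := by
  induction hd : n - coneDim σ using Nat.strong_induction_on generalizing σ with
  | _ d ih =>
  by_cases hσn : coneDim σ = n
  · exact ⟨σ, hσ, subset_rfl, hσn⟩
  obtain ⟨σ'', hσ'', hσσ'', hlt⟩ :=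
    hfan.exists_superset_coneDim_lt hτ hsupp hfull hσ (lt_of_le_of_ne (coneDim_le σ) hσn)
  obtain ⟨σ', hσ', hσ''σ', hσ'n⟩ := ih _ (by have := coneDim_le σ''; omega) hσ'' rfl
  exact ⟨σ', hσ', hσσ''.trans hσ''σ', hσ'n⟩

end Purity

section Pushforward

theorem mem_perpOf {s : Set (V n)} {m : Module.Dual ℚ (V n)} :
    m ∈ perpOf s ↔ ∀ x ∈ s, m x = 0 :=
  Iff.rfl

theorem phiMap_eq_bot {B C : Set (Set (V n))} {ζ : Set (V n)} (h : ∃ ν ∈ B, IsRayOf ν ζ) :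
    phiMap B C ζ = ⊥ :=
  if_pos h

theorem mem_phiMap_iff {B C : Set (Set (V n))} {ζ : Set (V n)} (h : ¬ ∃ ν ∈ B, IsRayOf ν ζ)
    {m : Module.Dual ℚ (V n)} :
    m ∈ phiMap B C ζ ↔ ∀ ν, IsRayOf ν ζ → ν ∉ B → ν ∉ C → ∀ x ∈ ν, m x = 0 := by
  simp only [phiMap, if_neg h, Submodule.mem_iInf, mem_perpOf, Set.mem_ofPred_eq,
    Set.mem_union, not_or, and_imp]

theorem not_exists_isRayOf_of_subset {τ ζ F : Set (V n)} {B B' : Set (Set (V n))}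
    (hτ : IsPolyCone τ) (hζ : IsFaceOf ζ τ)
    (hB' : ∀ ν' ∈ B', ∀ ζ, IsFaceOf ζ τ → ν' ⊆ ζ →
      (∀ ζ₂, IsFaceOf ζ₂ τ → ν' ⊆ ζ₂ → ζ ⊆ ζ₂) → ∃ β ∈ B, IsRayOf β ζ)
    (hBζ : ¬ ∃ β ∈ B, IsRayOf β ζ) (hFζ : F ⊆ ζ) : ¬ ∃ ν ∈ B', IsRayOf ν F := by
  rintro ⟨ν, hνB', hν⟩
  obtain ⟨G, hG, hνG, hGmin, hGζ⟩ := exists_least_face hτ hζ (hν.1.subset.trans hFζ)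
  obtain ⟨β, hβB, hβ⟩ := hB' ν hνB' G hG hνG hGmin
  exact hBζ ⟨β, hβB, hβ.trans hGζ (hζ.isPolyCone hτ)⟩

theorem IsFaceOf.eq_zero_of_mem_phiMap {ζ F : Set (V n)} {B C : Set (Set (V n))}
    {m : Module.Dual ℚ (V n)} (hF : IsFaceOf F ζ) (hζ : IsPolyCone ζ) (hsc : StronglyConvex ζ)
    (hBζ : ¬ ∃ β ∈ B, IsRayOf β ζ) (hm : m ∈ phiMap B C ζ) (hCF : ¬ ∃ c ∈ C, IsRayOf c F)
    {x : V n} (hx : x ∈ F) : m x = 0 :=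
  eq_zero_of_forall_isRayOf (hF.isPolyCone hζ) (hsc.mono hF.subset)
    (fun ν hν => (mem_phiMap_iff hBζ).mp hm ν (hν.trans hF hζ)
      (fun h => hBζ ⟨ν, h, hν.trans hF hζ⟩) fun h => hCF ⟨ν, h, hν⟩) hx

theorem eq_zero_of_mem_phiMap_of_subset {τ ζ ν : Set (V n)} {B C C' : Set (Set (V n))}
    {m : Module.Dual ℚ (V n)} (hτ : IsPolyCone τ) (hsc : StronglyConvex τ) (hζ : IsFaceOf ζ τ)
    (hCdom : ∀ F, IsFaceOf F τ → ν ⊆ F → (∀ G, IsFaceOf G τ → ν ⊆ G → F ⊆ G) →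
      (∃ c ∈ C, IsRayOf c F) → (¬ ∃ b ∈ B, IsRayOf b F) → ν ∈ C')
    (hνζ : ν ⊆ ζ) (hνC' : ν ∉ C') (hBζ : ¬ ∃ β ∈ B, IsRayOf β ζ) (hm : m ∈ phiMap B C ζ)
    {x : V n} (hx : x ∈ ν) : m x = 0 := by
  obtain ⟨F, hF, hνF, hFmin, hFζ⟩ := exists_least_face hτ hζ hνζ
  have hFB : ¬ ∃ β ∈ B, IsRayOf β F :=
    fun ⟨β, hβB, hβ⟩ => hBζ ⟨β, hβB, hβ.trans hFζ (hζ.isPolyCone hτ)⟩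
  exact hFζ.eq_zero_of_mem_phiMap (hζ.isPolyCone hτ) (hsc.mono hζ.subset) hBζ hm
    (fun hCF => hνC' (hCdom F hF hνF hFmin hCF hFB)) (hνF hx)

theorem IsSubdivision.support_eq {X : Set (Set (V n))} {τ : Set (V n)}
    (hsub : IsSubdivision X (faces τ)) : support X = τ :=
  hsub.2.1.trans (support_faces τ)

theorem IsSubdivision.subset {X : Set (Set (V n))} {τ σ : Set (V n)}
    (hsub : IsSubdivision X (faces τ)) (hσ : σ ∈ X) : σ ⊆ τ :=
  hsub.support_eq ▸ Set.subset_sUnion_of_mem hσ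

theorem IsSubdivision.exists_superset_coneDim_eq_of_isRayOf {X : Set (Set (V n))} {τ ν : Set (V n)}
    (hsub : IsSubdivision X (faces τ)) (hτ : IsPolyCone τ) (hsc : StronglyConvex τ)
    (hfull : Submodule.span ℚ τ = ⊤) (hν : IsRayOf ν τ) : ∃ σ ∈ X, coneDim σ = n ∧ ν ⊆ σ := by
  have hsupp : support X = τ := hsub.support_eq
  obtain ⟨x, hxν, hx0⟩ := hν.exists_ne_zero
  obtain ⟨σ₀, hσ₀, hxσ₀⟩ : x ∈ support X := hsupp ▸ hν.1.subset hxν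
  obtain ⟨σ, hσ, hσ₀σ, hσn⟩ := hsub.1.exists_superset_coneDim_eq hτ hsupp hfull hσ₀
  exact ⟨σ, hσ, hσn, hν.subset_of_mem hτ hsc hxν hx0 (hsub.1.2.1 σ hσ).1 (hσ₀σ hxσ₀)⟩

theorem IsRayOf.isRayOf_of_forall_subset {ν τ σ ζ Ξ : Set (V n)} (hν : IsRayOf ν τ)
    (hστ : σ ⊆ τ) (hνσ : ν ⊆ σ) (hνζ : ν ⊆ ζ) (hΞ : IsFaceOf Ξ σ)
    (hmax : ∀ F, IsFaceOf F σ → F ⊆ ζ → F ⊆ Ξ) : IsRayOf ν Ξ :=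
  have hνσ' : IsRayOf ν σ := hν.restrict hνσ hστ
  hνσ'.restrict (hmax ν hνσ'.1 hνζ) hΞ.subset

end Pushforward

theorem phi_pushforward_general {n : ℕ} (τ : Set (V n)) (B C : Set (Set (V n)))
    (hτ : IsPolyCone τ) (hsc : StronglyConvex τ)
    (hfull : Submodule.span ℚ τ = ⊤)
    (X' B' C' : Set (Set (V n))) (hsub : IsSubdivision X' (faces τ))
    (k : ℕ) (τ' : Fin k → Set (V n))
    (hτ' : ∀ i, τ' i ∈ X' ∧ coneDim (τ' i) = n)
    (hτ'' : ∀ σ ∈ X', coneDim σ = n → ∃ i, σ = τ' i)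
    (hB' : ∀ ν' ∈ B', ∀ ζ, IsFaceOf ζ τ → ν' ⊆ ζ →
      (∀ ζ₂, IsFaceOf ζ₂ τ → ν' ⊆ ζ₂ → ζ ⊆ ζ₂) → ∃ β ∈ B, IsRayOf β ζ)
    (hC' : ∀ ν' ∈ C', IsRayOf ν' τ → ν' ∈ C)
    (hBB' : B ⊆ B')
    (hCdom : ∀ ν' ∈ raysIn X', ∀ ζ, IsFaceOf ζ τ → ν' ⊆ ζ →
      (∀ ζ₂, IsFaceOf ζ₂ τ → ν' ⊆ ζ₂ → ζ ⊆ ζ₂) →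
      (∃ c ∈ C, IsRayOf c ζ) → (¬ ∃ b ∈ B, IsRayOf b ζ) → ν' ∈ C') :
    ∀ ζ, IsFaceOf ζ τ → ∀ Ξ : Fin k → Set (V n),
      (∀ i, IsFaceOf (Ξ i) (τ' i) ∧ Ξ i ⊆ ζ ∧
        ∀ F, IsFaceOf F (τ' i) → F ⊆ ζ → F ⊆ Ξ i) →
      phiMap B C ζ = ⨅ i, phiMap B' C' (Ξ i) := by
  intro ζ hζ Ξ hΞ
  have hcover : ∀ ν, IsRayOf ν ζ → ∃ i, IsRayOf ν (Ξ i) := by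
    intro ν hν
    have hντ := hν.trans hζ hτ
    obtain ⟨σ, hσ, hσn, hνσ⟩ := hsub.exists_superset_coneDim_eq_of_isRayOf hτ hsc hfull hντ
    obtain ⟨i, rfl⟩ := hτ'' σ hσ hσn
    exact ⟨i, hντ.isRayOf_of_forall_subset (hsub.subset hσ) hνσ hν.1.subset (hΞ i).1
      (hΞ i).2.2⟩
  by_cases hBζ : ∃ β ∈ B, IsRayOf β ζ
  · obtain ⟨β, hβB, hβ⟩ := hBζ
    obtain ⟨i, hβi⟩ := hcover β hβ
    rw [phiMap_eq_bot ⟨β, hβB, hβ⟩, eq_comm, eq_bot_iff]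
    exact (iInf_le _ i).trans (phiMap_eq_bot ⟨β, hBB' hβB, hβi⟩).le
  have hnoB' : ∀ F ⊆ ζ, ¬ ∃ ν ∈ B', IsRayOf ν F :=
    fun F hF => not_exists_isRayOf_of_subset hτ hζ hB' hBζ hF
  ext m
  simp only [Submodule.mem_iInf, mem_phiMap_iff (hnoB' _ (hΞ _).2.1)]
  constructor
  · intro hm i ν hν _ hνC'
    have hνX' : ν ∈ raysIn X' :=
      ⟨hsub.1.2.2.1 _ (hsub.1.2.2.1 _ (hτ' i).1 _ (hΞ i).1) ν hν.1, hν.2⟩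
    exact fun x => eq_zero_of_mem_phiMap_of_subset hτ hsc hζ (hCdom ν hνX')
      (hν.1.subset.trans (hΞ i).2.1) hνC' hBζ hm
  · intro hm
    rw [mem_phiMap_iff hBζ]
    intro ν hν hνB hνC
    obtain ⟨i, hνi⟩ := hcover ν hν
    exact hm i ν hνi (fun hνB' => hnoB' ν hν.1.subset ⟨ν, hνB', ⟨isFaceOf_self ν, hν.2⟩⟩)
      fun hνC' => hνC (hC' ν hνC' (hν.trans hζ hτ))

/-- the combinatorial pushforward formula
`φ(ζ) = ⋂ᵢ φᵢ(Ξᵢ(ζ))` for a subdivision with full-dimensional cones `τ₁, …, τ_k`. -/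
theorem phi_pushforward {n : ℕ} (τ : Set (V n)) (B C : Set (Set (V n)))
    (hτ : IsPolyCone τ) (hsc : StronglyConvex τ)
    (hfull : Submodule.span ℚ τ = ⊤)
    (hT : IsTripleData (faces τ) B C)
    (X' B' C' : Set (Set (V n))) (hsub : IsSubdivision X' (faces τ))
    (hT' : IsTripleData X' B' C')
    (k : ℕ) (τ' : Fin k → Set (V n))
    (hτ' : ∀ i, τ' i ∈ X' ∧ coneDim (τ' i) = n)
    (hτ'' : ∀ σ ∈ X', coneDim σ = n → ∃ i, σ = τ' i)
    (hB' : ∀ ν' ∈ B', ∀ ζ, IsFaceOf ζ τ → ν' ⊆ ζ →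
      (∀ ζ₂, IsFaceOf ζ₂ τ → ν' ⊆ ζ₂ → ζ ⊆ ζ₂) → ∃ β ∈ B, IsRayOf β ζ)
    (hC' : ∀ ν' ∈ C', IsRayOf ν' τ → ν' ∈ C)
    (hBB' : B ⊆ B')
    (hCdom : ∀ ν' ∈ raysIn X', ∀ ζ, IsFaceOf ζ τ → ν' ⊆ ζ →
      (∀ ζ₂, IsFaceOf ζ₂ τ → ν' ⊆ ζ₂ → ζ ⊆ ζ₂) →
      (∃ c ∈ C, IsRayOf c ζ) → (¬ ∃ b ∈ B, IsRayOf b ζ) → ν' ∈ C') :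
    ∀ ζ, IsFaceOf ζ τ → ∀ Ξ : Fin k → Set (V n),
      (∀ i, IsFaceOf (Ξ i) (τ' i) ∧ Ξ i ⊆ ζ ∧
        ∀ F, IsFaceOf F (τ' i) → F ⊆ ζ → F ⊆ Ξ i) →
      phiMap B C ζ = ⨅ i, phiMap B' C' (Ξ i) :=
  phi_pushforward_general τ B C hτ hsc hfull X' B' C' hsub k τ' hτ' hτ'' hB' hC' hBB' hCdom

end ToricPaper
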